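/- arXiv:gr-qc/0303043 — 7 statements merged into one kernel-verified Lean document; each statement's English description precedes it below -/
import Mathlib

section
/- Let α > 0 and let Ψ₃₀, Ψ₂₁, Ψ₁₂, Ψ₀₃ be real numbers. Define the polynomials A₀(τ) = 3Ψ₃₀ + 2Ψ₂₁τ + Ψ₁₂τ² and B₀(τ) = Ψ₂₁ + 2Ψ₁₂τ + 3Ψ₀₃τ². Assume A₀(1) > 0, B₀(1) < 0, and that for every τ ∈ (0,1] with B₀(τ) ≠ 0 one has B₀(1)τ²/B₀(τ) > 0 and (A₀(τ)/A₀(1)) · (B₀(1)τ²/B₀(τ))^{α/(α+1)} = 1. Then Ψ₂₁ = 0 and Ψ₁₂ = 0. -/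
/-!
Write `β = α / (α + 1) > 0`. If `Ψ₂₁` and `Ψ₁₂` do not both vanish, then `B₀` vanishes to
order at most one at `τ = 0`, so `B₀(1) τ² / B₀(τ) → 0` as `τ → 0⁺`. Since `A₀(τ) / A₀(1)`
converges, the left side of the regularity identity then tends to `0`, so it cannot be
identically `1` near `0⁺`.
-/

open Filter Topology

lemma not_eventually_mul_rpow_eq_one {X : Type*} {l : Filter X} [l.NeBot] {f g : X → ℝ}
    {L β : ℝ} (hf : Tendsto f l (𝓝 L)) (hg : Tendsto g l (𝓝 0)) (hβ : 0 < β) :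
    ¬ ∀ᶠ x in l, f x * g x ^ β = 1 := by
  intro h
  have hzero : Tendsto (fun x => f x * g x ^ β) l (𝓝 0) := by
    simpa only [Real.zero_rpow hβ.ne', mul_zero] using hf.mul (hg.rpow_const (Or.inr hβ.le))
  have hone : Tendsto (fun x => f x * g x ^ β) l (𝓝 1) :=
    tendsto_const_nhds.congr' (h.mono fun _ hx => hx.symm)
  exact zero_ne_one (tendsto_nhds_unique hzero hone)

section PowMul

variable {r : ℝ → ℝ} {k : ℕ}

lemma eventually_pow_mul_ne_zero_nhdsGT (hr : ContinuousAt r 0) (hr0 : r 0 ≠ 0) :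
    ∀ᶠ τ in 𝓝[>] (0 : ℝ), τ ^ k * r τ ≠ 0 := by
  filter_upwards [self_mem_nhdsWithin,
    (hr.eventually_ne hr0).filter_mono nhdsWithin_le_nhds] with τ hτ hrτ
  exact mul_ne_zero (pow_ne_zero k (ne_of_gt hτ)) hrτ

lemma tendsto_pow_div_pow_mul_nhdsGT {n : ℕ} (hkn : k < n) (hr : ContinuousAt r 0)
    (hr0 : r 0 ≠ 0) : Tendsto (fun τ => τ ^ n / (τ ^ k * r τ)) (𝓝[>] (0 : ℝ)) (𝓝 0) := by
  have hpow : Tendsto (fun τ : ℝ => τ ^ (n - k)) (𝓝[>] 0) (𝓝 0) := by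
    have := ((continuous_pow (n - k)).tendsto (0 : ℝ)).mono_left
      (nhdsWithin_le_nhds (s := Set.Ioi 0))
    rwa [zero_pow (Nat.sub_ne_zero_of_lt hkn)] at this
  have hquot : Tendsto (fun τ => τ ^ (n - k) / r τ) (𝓝[>] (0 : ℝ)) (𝓝 0) := by
    have := hpow.div (hr.tendsto.mono_left nhdsWithin_le_nhds) hr0
    rwa [zero_div] at this
  refine hquot.congr' ?_
  filter_upwards [self_mem_nhdsWithin] with τ hτ
  rw [← Nat.sub_add_cancel hkn.le, pow_add, Nat.add_sub_cancel,
    mul_comm (τ ^ (n - k)), mul_div_mul_left _ _ (pow_ne_zero k (ne_of_gt hτ))]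

end PowMul

lemma quadratic_eventually_ne_zero_and_tendsto_sq_div {a b c : ℝ} (hab : a ≠ 0 ∨ b ≠ 0) :
    (∀ᶠ τ in 𝓝[>] (0 : ℝ), a + b * τ + c * τ ^ 2 ≠ 0) ∧
      Tendsto (fun τ => τ ^ 2 / (a + b * τ + c * τ ^ 2)) (𝓝[>] (0 : ℝ)) (𝓝 0) := by
  obtain ⟨k, hk, r, hr, hr0, hq⟩ : ∃ k < 2, ∃ r : ℝ → ℝ, Continuous r ∧ r 0 ≠ 0 ∧
      ∀ τ, a + b * τ + c * τ ^ 2 = τ ^ k * r τ := by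
    by_cases ha : a = 0
    · refine ⟨1, one_lt_two, fun τ => b + c * τ, by fun_prop, ?_, fun τ => ?_⟩
      · simpa using hab.resolve_left (not_not.mpr ha)
      · rw [ha]; ring
    · exact ⟨0, two_pos, fun τ => a + b * τ + c * τ ^ 2, by fun_prop, by simpa using ha,
        fun τ => by ring⟩
  simp only [hq]
  exact ⟨eventually_pow_mul_ne_zero_nhdsGT hr.continuousAt hr0,
    tendsto_pow_div_pow_mul_nhdsGT hk hr.continuousAt hr0⟩

theorem stmt0_general (α Ψ30 Ψ21 Ψ12 Ψ03 : ℝ)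
    (A0 B0 : ℝ → ℝ)
    (hA0 : ∀ τ : ℝ, A0 τ = 3 * Ψ30 + 2 * Ψ21 * τ + Ψ12 * τ ^ 2)
    (hB0 : ∀ τ : ℝ, B0 τ = Ψ21 + 2 * Ψ12 * τ + 3 * Ψ03 * τ ^ 2)
    (hα : 0 < α)
    (hreg : ∀ τ ∈ Set.Ioc (0 : ℝ) 1, B0 τ ≠ 0 →
      0 < B0 1 * τ ^ 2 / B0 τ ∧
      (A0 τ / A0 1) * (B0 1 * τ ^ 2 / B0 τ) ^ (α / (α + 1)) = 1) :
    Ψ21 = 0 ∧ Ψ12 = 0 := by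
  by_contra hΨ
  have hA : Tendsto (fun τ => A0 τ / A0 1) (𝓝[>] (0 : ℝ)) (𝓝 (A0 0 / A0 1)) := by
    have hAc : Continuous A0 := by rw [funext hA0]; fun_prop
    exact ((hAc.tendsto 0).div_const _).mono_left nhdsWithin_le_nhds
  obtain ⟨hBne, hlim⟩ : (∀ᶠ τ in 𝓝[>] (0 : ℝ), B0 τ ≠ 0) ∧
      Tendsto (fun τ => τ ^ 2 / B0 τ) (𝓝[>] (0 : ℝ)) (𝓝 0) := by
    simp only [hB0]
    exact quadratic_eventually_ne_zero_and_tendsto_sq_div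
      ((not_and_or.mp hΨ).imp id (mul_ne_zero two_ne_zero))
  have hB : Tendsto (fun τ => B0 1 * τ ^ 2 / B0 τ) (𝓝[>] (0 : ℝ)) (𝓝 0) := by
    simpa only [mul_div_assoc, mul_zero] using hlim.const_mul (B0 1)
  refine not_eventually_mul_rpow_eq_one (β := α / (α + 1)) hA hB (by positivity) ?_
  filter_upwards [Ioc_mem_nhdsGT_of_mem ⟨le_rfl, one_pos⟩, hBne] with τ hτ hτne
  exact (hreg τ hτ hτne).2

/-- If `α > 0`, `A₀(τ) = 3Ψ₃₀ + 2Ψ₂₁τ + Ψ₁₂τ²`,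
`B₀(τ) = Ψ₂₁ + 2Ψ₁₂τ + 3Ψ₀₃τ²`, `A₀(1) > 0`, `B₀(1) < 0`, and for every
`τ ∈ (0,1]` with `B₀(τ) ≠ 0` one has `B₀(1)τ²/B₀(τ) > 0` and
`(A₀(τ)/A₀(1)) · (B₀(1)τ²/B₀(τ))^{α/(α+1)} = 1`, then `Ψ₂₁ = 0` and `Ψ₁₂ = 0`. -/
theorem stmt0 (α Ψ30 Ψ21 Ψ12 Ψ03 : ℝ)
    (A0 B0 : ℝ → ℝ)
    (hA0 : ∀ τ : ℝ, A0 τ = 3 * Ψ30 + 2 * Ψ21 * τ + Ψ12 * τ ^ 2)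
    (hB0 : ∀ τ : ℝ, B0 τ = Ψ21 + 2 * Ψ12 * τ + 3 * Ψ03 * τ ^ 2)
    (hα : 0 < α)
    (hA1 : 0 < A0 1)
    (hB1 : B0 1 < 0)
    (hreg : ∀ τ ∈ Set.Ioc (0 : ℝ) 1, B0 τ ≠ 0 →
      0 < B0 1 * τ ^ 2 / B0 τ ∧
      (A0 τ / A0 1) * (B0 1 * τ ^ 2 / B0 τ) ^ (α / (α + 1)) = 1) :
    Ψ21 = 0 ∧ Ψ12 = 0 :=
  stmt0_general α Ψ30 Ψ21 Ψ12 Ψ03 A0 B0 hA0 hB0 hα hreg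
end

section
/- Let α > 0 and let Ψ : ℝ × ℝ → ℝ be analytic in a neighborhood of (0,0), with convergent power series Ψ(r,R) = Σ_{i,j≥0} Ψ_{ij} r^i R^j. Assume: (i) Ψ is odd, i.e. Ψ_{ij} = 0 whenever i + j is even; (ii) Ψ_{ij} = 0 whenever i + j < 3; (iii) the limit L := lim_{r→0⁺} ∂_rΨ(r,r)/r² exists and lies in (0,∞); (iv) ∂_RΨ(r,r) = −(α/(α+1)) ∂_rΨ(r,r) for all sufficiently small r > 0; (v) for every τ ∈ (0,1], one has lim_{r→0⁺} [∂_rΨ(r,rτ)/∂_rΨ(r,r)] · [∂_RΨ(r,r)τ²/∂_RΨ(r,rτ)]^{α/(α+1)} = 1, where for all sufficiently small r > 0 the quantity ∂_RΨ(r,r)τ²/∂_RΨ(r,rτ) is positive. Then Ψ₂₁ = Ψ₁₂ = 0, Ψ₃₀ > 0, and Ψ₀₃ = −(α/(α+1))Ψ₃₀; equivalently, setting h := 2Ψ₃₀ > 0, the Taylor expansion of Ψ has the structure Ψ(r,R) = (h/2)(r³ − (α/(α+1))R³) + (terms of total degree ≥ 5). -/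
/-!
Termwise differentiation of the series shows that along each ray `R = τ r`
`∂_rΨ(r, τr) / r² → p(τ) := 3c₃₀ + 2c₂₁τ + c₁₂τ²` and
`∂_RΨ(r, τr) / r² → q(τ) := c₂₁ + 2c₁₂τ + 3c₀₃τ²`, the terms of degree `≥ 4` contributing `O(r)`.
Condition (iii) gives `p(1) = L > 0`, condition (iv) gives `q(1) = -βL` with `β = α/(α+1)`, and
passing to the limit in (v) gives `|q(τ)| = βLτ² (p(τ)/L)^(1/β)` whenever `q(τ) ≠ 0`. Since `p` is
bounded on `[0,1]`, `q(τ) = O(τ²)`, so `c₂₁ = c₁₂ = 0`, and then `p(1) = 3c₃₀ = L`,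
`q(1) = 3c₀₃ = -βL`.
-/

open Filter Topology Set Asymptotics

/- Differentiation produces the factor `i`, which `i ≤ 2 ^ (i + j)` absorbs, so the series
`∑ |c i j| (2δ) ^ (i + j)` dominates every derivative term on the square of side `δ`. -/
lemma abs_natCast_mul_pow_pred_mul_pow_le {c y R m δ : ℝ} {i j k : ℕ} (hδ : 0 < δ)
    (hy : |y| ≤ m) (hR : |R| ≤ m) (hmδ : m ≤ δ) (hk : k ≤ i - 1 + j) :
    |i * c * y ^ (i - 1) * R ^ j| ≤ m ^ k / δ ^ (k + 1) * (|c| * (2 * δ) ^ (i + j)) := by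
  have hm : 0 ≤ m := (abs_nonneg y).trans hy
  rcases i with _ | n
  · simp only [CharP.cast_eq_zero, zero_mul, abs_zero]
    positivity
  rw [Nat.add_sub_cancel] at hk ⊢
  obtain ⟨p, hp⟩ := Nat.exists_eq_add_of_le hk
  have htwo : ((n + 1 : ℕ) : ℝ) ≤ 2 ^ (n + 1 + j) := by
    exact_mod_cast Nat.lt_two_pow_self.le.trans (Nat.pow_le_pow_right two_pos (by omega))
  have hmono : |y| ^ n * |R| ^ j ≤ m ^ k * δ ^ p := calc
    |y| ^ n * |R| ^ j ≤ m ^ n * m ^ j := by gcongr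
    _ = m ^ k * m ^ p := by rw [← pow_add, ← pow_add, hp]
    _ ≤ m ^ k * δ ^ p := by gcongr
  calc |((n + 1 : ℕ) : ℝ) * c * y ^ n * R ^ j|
      = ((n + 1 : ℕ) : ℝ) * |c| * (|y| ^ n * |R| ^ j) := by
        simp only [abs_mul, abs_pow, Nat.abs_cast]; ring
    _ ≤ 2 ^ (n + 1 + j) * |c| * (m ^ k * δ ^ p) := by gcongr
    _ = m ^ k / δ ^ (k + 1) * (|c| * (2 * δ) ^ (n + 1 + j)) := by
        rw [show n + 1 + j = (k + 1) + p by omega, mul_pow, pow_add δ]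
        field_simp
        ring

open Finset in
lemma abs_tsum_sub_quadratic_le {c : ℕ → ℕ → ℝ} {δ m r R : ℝ} (hδ : 0 < δ)
    (hA : Summable fun ij : ℕ × ℕ => |c ij.1 ij.2| * (2 * δ) ^ (ij.1 + ij.2))
    (hlow : ∀ i j : ℕ, i + j < 3 → c i j = 0) (hr : |r| ≤ m) (hR : |R| ≤ m) (hmδ : m ≤ δ) :
    |∑' ij : ℕ × ℕ, ij.1 * c ij.1 ij.2 * r ^ (ij.1 - 1) * R ^ ij.2
        - (3 * c 3 0 * r ^ 2 + 2 * c 2 1 * r * R + c 1 2 * R ^ 2)|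
      ≤ m ^ 3 / δ ^ 4 * ∑' ij : ℕ × ℕ, |c ij.1 ij.2| * (2 * δ) ^ (ij.1 + ij.2) := by
  have hm : 0 ≤ m := (abs_nonneg r).trans hr
  set f : ℕ × ℕ → ℝ := fun ij => ij.1 * c ij.1 ij.2 * r ^ (ij.1 - 1) * R ^ ij.2
  have hf : Summable f := (hA.div_const δ).of_norm_bounded fun ij =>
    (abs_natCast_mul_pow_pred_mul_pow_le (k := 0) hδ (hr.trans hmδ) (hR.trans hmδ) le_rfl
      (Nat.zero_le _)).trans_eq (by ring)
  have hcubic : ∑ ij ∈ antidiagonal 3, f ij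
      = 3 * c 3 0 * r ^ 2 + 2 * c 2 1 * r * R + c 1 2 * R ^ 2 := by
    simp only [f, Nat.sum_antidiagonal_succ, HasAntidiagonal.antidiagonal_zero, sum_singleton,
      Nat.reduceAdd, Nat.cast_ofNat, Nat.cast_one, CharP.cast_eq_zero, Nat.add_one_sub_one,
      zero_mul, zero_add]
    ring
  rw [← hf.sum_add_tsum_compl (s := antidiagonal 3), hcubic, add_sub_cancel_left,
    _root_.tsum_subtype, ← Real.norm_eq_abs]
  refine tsum_of_norm_bounded (hA.hasSum.mul_left (m ^ 3 / δ ^ 4)) fun ⟨i, j⟩ => ?_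
  by_cases hij : (i, j) ∈ (antidiagonal 3 : Set (ℕ × ℕ))ᶜ
  · rw [indicator_of_mem hij, Real.norm_eq_abs]
    simp only [mem_compl_iff, mem_coe, HasAntidiagonal.mem_antidiagonal] at hij
    rcases lt_or_gt_of_ne hij with hlt | hgt
    · simp only [f, hlow i j hlt, mul_zero, zero_mul, abs_zero]
      positivity
    · exact abs_natCast_mul_pow_pred_mul_pow_le hδ hr hR hmδ (by omega)
  · rw [indicator_of_notMem hij, norm_zero]
    positivity

def HasDoublePowerSeries (Ψ : ℝ → ℝ → ℝ) (c : ℕ → ℕ → ℝ) (ε : ℝ) : Prop :=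
  ∀ r R : ℝ, |r| < ε → |R| < ε →
    HasSum (fun ij : ℕ × ℕ => c ij.1 ij.2 * r ^ ij.1 * R ^ ij.2) (Ψ r R)

namespace HasDoublePowerSeries

variable {Ψ : ℝ → ℝ → ℝ} {c : ℕ → ℕ → ℝ} {ε : ℝ}

lemma swap (h : HasDoublePowerSeries Ψ c ε) :
    HasDoublePowerSeries (fun r R => Ψ R r) (fun i j => c j i) ε := by
  intro r R hr hR
  rw [← (Equiv.prodComm ℕ ℕ).hasSum_iff]
  simpa only [Function.comp_def, Equiv.prodComm_apply, Prod.fst_swap, Prod.snd_swap,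
    mul_right_comm] using h R r hR hr

lemma summable_abs_mul_pow (h : HasDoublePowerSeries Ψ c ε) {ρ : ℝ} (hρ : 0 ≤ ρ) (hρε : ρ < ε) :
    Summable fun ij : ℕ × ℕ => |c ij.1 ij.2| * ρ ^ (ij.1 + ij.2) := by
  have hρ' : |ρ| < ε := by rwa [abs_of_nonneg hρ]
  refine (h ρ ρ hρ' hρ').summable.abs.congr fun ij => ?_
  rw [abs_mul, abs_mul, abs_pow, abs_pow, abs_of_nonneg hρ, pow_add, mul_assoc]

lemma hasDerivAt (h : HasDoublePowerSeries Ψ c ε) {δ r R : ℝ} (hδ : 0 < δ) (hδε : 2 * δ < ε)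
    (hr : |r| < δ) (hR : |R| ≤ δ) :
    HasDerivAt (fun s => Ψ s R)
      (∑' ij : ℕ × ℕ, ij.1 * c ij.1 ij.2 * r ^ (ij.1 - 1) * R ^ ij.2) r := by
  have hball : ∀ y ∈ Metric.ball (0 : ℝ) δ, |y| < ε := fun y hy => by
    rw [mem_ball_zero_iff, Real.norm_eq_abs] at hy; linarith
  have hrball : r ∈ Metric.ball (0 : ℝ) δ := by rwa [mem_ball_zero_iff, Real.norm_eq_abs]
  have hRε : |R| < ε := by linarith
  have hsum := hasDerivAt_tsum_of_isPreconnected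
    (g := fun (ij : ℕ × ℕ) (s : ℝ) => c ij.1 ij.2 * s ^ ij.1 * R ^ ij.2)
    (g' := fun (ij : ℕ × ℕ) (y : ℝ) => ij.1 * c ij.1 ij.2 * y ^ (ij.1 - 1) * R ^ ij.2)
    ((h.summable_abs_mul_pow (by positivity) hδε).div_const δ)
    Metric.isOpen_ball (convex_ball 0 δ).isPreconnected
    (fun ij y _ => (((hasDerivAt_pow ij.1 y).const_mul _).mul_const _).congr_deriv (by ring))
    (fun ij y hy => by
      rw [mem_ball_zero_iff, Real.norm_eq_abs] at hy
      rw [Real.norm_eq_abs]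
      exact (abs_natCast_mul_pow_pred_mul_pow_le (k := 0) hδ hy.le hR le_rfl
        (Nat.zero_le _)).trans_eq (by ring))
    hrball (h r R (hball r hrball) hRε).summable hrball
  refine hsum.congr_of_eventuallyEq ?_
  filter_upwards [Metric.isOpen_ball.mem_nhds hrball] with s hs
  exact (h s R (hball s hs) hRε).tsum_eq.symm

lemma isBigO_deriv_sub_quadratic (h : HasDoublePowerSeries Ψ c ε) (hε : 0 < ε)
    (hlow : ∀ i j : ℕ, i + j < 3 → c i j = 0) :
    (fun p : ℝ × ℝ => deriv (fun s => Ψ s p.2) p.1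
        - (3 * c 3 0 * p.1 ^ 2 + 2 * c 2 1 * p.1 * p.2 + c 1 2 * p.2 ^ 2))
      =O[𝓝 0] fun p => ‖p‖ ^ 3 := by
  obtain ⟨δ, hδ, hδε⟩ : ∃ δ, 0 < δ ∧ 2 * δ < ε := ⟨ε / 4, by positivity, by linarith⟩
  have hA := h.summable_abs_mul_pow (by positivity) hδε
  refine .of_bound ((∑' ij : ℕ × ℕ, |c ij.1 ij.2| * (2 * δ) ^ (ij.1 + ij.2)) / δ ^ 4) ?_
  filter_upwards [Metric.ball_mem_nhds 0 hδ] with p hp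
  rw [mem_ball_zero_iff] at hp
  have hr : |p.1| ≤ ‖p‖ := norm_fst_le p
  have hR : |p.2| ≤ ‖p‖ := norm_snd_le p
  rw [(h.hasDerivAt hδ hδε (hr.trans_lt hp) (hR.trans hp.le)).deriv, Real.norm_eq_abs,
    norm_pow, norm_norm]
  exact (abs_tsum_sub_quadratic_le hδ hA hlow hr hR hp.le).trans_eq (by ring)

lemma tendsto_deriv_div_sq (h : HasDoublePowerSeries Ψ c ε) (hε : 0 < ε)
    (hlow : ∀ i j : ℕ, i + j < 3 → c i j = 0) (σ τ : ℝ) :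
    Tendsto (fun r => deriv (fun s => Ψ s (τ * r)) (σ * r) / r ^ 2) (𝓝[>] 0)
      (𝓝 (3 * c 3 0 * σ ^ 2 + 2 * c 2 1 * σ * τ + c 1 2 * τ ^ 2)) := by
  have hray : Tendsto (fun r : ℝ => (σ * r, τ * r)) (𝓝 0) (𝓝 0) :=
    Continuous.tendsto' (by fun_prop) _ _ (by simp)
  have hcubic : (fun r : ℝ => ‖(σ * r, τ * r)‖ ^ 3) =O[𝓝 0] fun r => r ^ 3 :=
    .of_bound (max |σ| |τ| ^ 3) (.of_forall fun r => by
      rw [norm_pow, norm_norm, norm_pow, ← mul_pow, Prod.norm_def]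
      gcongr
      simp only [norm_mul, Real.norm_eq_abs, ← max_mul_of_nonneg _ _ (abs_nonneg r), le_refl])
  have hsmall := ((h.isBigO_deriv_sub_quadratic hε hlow).comp_tendsto hray).trans_isLittleO
    (hcubic.trans_isLittleO (isLittleO_pow_pow (by norm_num : 2 < 3)))
  have hlim := (hsmall.tendsto_div_nhds_zero.mono_left (nhdsWithin_le_nhds (s := Ioi 0))).add_const
    (3 * c 3 0 * σ ^ 2 + 2 * c 2 1 * σ * τ + c 1 2 * τ ^ 2)
  rw [zero_add] at hlim
  refine hlim.congr' ?_
  filter_upwards [self_mem_nhdsWithin] with r (hr : 0 < r)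
  simp only [Function.comp_apply]
  field_simp
  ring
end HasDoublePowerSeries

lemma tendsto_div_of_tendsto_div_common {α 𝕜 : Type*} [NormedField 𝕜] {l : Filter α}
    {f g s : α → 𝕜} {a b : 𝕜} (hf : Tendsto (fun x => f x / s x) l (𝓝 a))
    (hg : Tendsto (fun x => g x / s x) l (𝓝 b)) (hb : b ≠ 0) (hs : ∀ᶠ x in l, s x ≠ 0) :
    Tendsto (fun x => f x / g x) l (𝓝 (a / b)) :=
  (hf.div hg hb).congr' (hs.mono fun _ hx => div_div_div_cancel_right₀ hx _ _)

lemma pos_and_mul_rpow_eq_one_of_tendsto {α : Type*} {l : Filter α} [l.NeBot] {A B : α → ℝ}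
    {a b β : ℝ} (hβ : 0 < β) (hA : Tendsto A l (𝓝 a)) (hB : Tendsto B l (𝓝 b))
    (hB₀ : ∀ᶠ x in l, 0 ≤ B x) (hAB : Tendsto (fun x => A x * B x ^ β) l (𝓝 1)) :
    0 < b ∧ a * b ^ β = 1 := by
  have hab : a * b ^ β = 1 := tendsto_nhds_unique (hA.mul (hB.rpow_const (Or.inr hβ.le))) hAB
  refine ⟨(ge_of_tendsto hB hB₀).lt_of_ne ?_, hab⟩
  rintro rfl
  simp [Real.zero_rpow hβ.ne'] at hab

lemma abs_eq_of_tendsto_ratio {α : Type*} {l : Filter α} [l.NeBot] {P P₀ Q Q₀ s : α → ℝ}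
    {p q L β τ : ℝ} (hβ : 0 < β) (hL : 0 < L) (hq : q ≠ 0) (hs : ∀ᶠ x in l, s x ≠ 0)
    (hP : Tendsto (fun x => P x / s x) l (𝓝 p)) (hP₀ : Tendsto (fun x => P₀ x / s x) l (𝓝 L))
    (hQ : Tendsto (fun x => Q x / s x) l (𝓝 q))
    (hQ₀ : Tendsto (fun x => Q₀ x / s x) l (𝓝 (-β * L)))
    (hpos : ∀ᶠ x in l, 0 < Q₀ x * τ ^ 2 / Q x)
    (hlim : Tendsto (fun x => P x / P₀ x * (Q₀ x * τ ^ 2 / Q x) ^ β) l (𝓝 1)) :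
    0 < p ∧ |q| = β * L * τ ^ 2 * (p / L) ^ β⁻¹ := by
  have hQ₀' : Tendsto (fun x => Q₀ x * τ ^ 2 / s x) l (𝓝 (-β * L * τ ^ 2)) :=
    (hQ₀.mul_const (τ ^ 2)).congr fun x => div_mul_eq_mul_div _ _ _
  obtain ⟨hb, hpb⟩ := pos_and_mul_rpow_eq_one_of_tendsto hβ
    (tendsto_div_of_tendsto_div_common hP hP₀ hL.ne' hs)
    (tendsto_div_of_tendsto_div_common hQ₀' hQ hq hs) (hpos.mono fun _ => le_of_lt) hlim
  set b := -β * L * τ ^ 2 / q with hb_def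
  have hbβ : b ^ β = (p / L)⁻¹ := eq_inv_of_mul_eq_one_right hpb
  have hpL : 0 < p / L := inv_pos.mp (hbβ ▸ Real.rpow_pos_of_pos hb β)
  have hqb : q = -β * L * τ ^ 2 / b := by
    rw [eq_div_iff hb.ne', hb_def]
    field_simp
  refine ⟨(div_pos_iff_of_pos_right hL).mp hpL, ?_⟩
  have hnum : -β * L * τ ^ 2 ≤ 0 := by
    have : 0 ≤ β * L * τ ^ 2 := by positivity
    linarith
  rw [hqb, abs_div, abs_of_pos hb, abs_of_nonpos hnum, div_eq_mul_inv,
    ← Real.rpow_rpow_inv hb.le hβ.ne', hbβ, Real.inv_rpow hpL.le, inv_inv]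
  ring

lemma eq_zero_of_tendsto_of_abs_le_mul {f : ℝ → ℝ} {x K : ℝ} (hf : Tendsto f (𝓝[>] 0) (𝓝 x))
    (h : ∀ τ ∈ Ioc (0 : ℝ) 1, |f τ| ≤ K * τ) : x = 0 :=
  tendsto_nhds_unique hf <| squeeze_zero_norm' (eventually_of_mem (Ioc_mem_nhdsGT one_pos) h)
    (((continuous_const_mul K).tendsto' 0 0 (mul_zero K)).mono_left nhdsWithin_le_nhds)

lemma eq_zero_of_abs_le_mul_sq {a b e K : ℝ}
    (h : ∀ τ ∈ Ioc (0 : ℝ) 1, |a + b * τ + e * τ ^ 2| ≤ K * τ ^ 2) : a = 0 ∧ b = 0 := by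
  have ha : a = 0 := by
    refine eq_zero_of_tendsto_of_abs_le_mul (K := |K|)
      (((by fun_prop : Continuous fun τ : ℝ => a + b * τ + e * τ ^ 2).tendsto' 0 a (by simp)
        ).mono_left nhdsWithin_le_nhds) fun τ hτ => (h τ hτ).trans ?_
    calc K * τ ^ 2 ≤ |K| * τ ^ 2 := by gcongr; exact le_abs_self K
      _ ≤ |K| * τ := by
        have : τ ^ 2 ≤ τ := by nlinarith [hτ.1, hτ.2]
        gcongr
  subst ha
  refine ⟨rfl, eq_zero_of_tendsto_of_abs_le_mul (K := K)
    (((by fun_prop : Continuous fun τ : ℝ => b + e * τ).tendsto' 0 b (by simp)).mono_left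
      nhdsWithin_le_nhds) fun τ hτ => ?_⟩
  have hτ0 : 0 < τ := hτ.1
  have := h τ hτ
  rw [show 0 + b * τ + e * τ ^ 2 = (b + e * τ) * τ by ring, abs_mul, abs_of_pos hτ0,
    sq, ← mul_assoc] at this
  exact le_of_mul_le_mul_right this hτ0

lemma exists_abs_le_mul_sq_of_abs_eq {p q : ℝ → ℝ} {L β : ℝ} (hp : ContinuousOn p (Icc 0 1))
    (hL : 0 < L) (hβ : 0 < β)
    (h : ∀ τ ∈ Ioc (0 : ℝ) 1, q τ ≠ 0 → 0 < p τ ∧ |q τ| = β * L * τ ^ 2 * (p τ / L) ^ β⁻¹) :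
    ∃ K, ∀ τ ∈ Ioc (0 : ℝ) 1, |q τ| ≤ K * τ ^ 2 := by
  obtain ⟨G, hG⟩ := isCompact_Icc.exists_bound_of_continuousOn hp
  have hG₀ : 0 ≤ G := (norm_nonneg _).trans (hG 0 ⟨le_rfl, zero_le_one⟩)
  refine ⟨β * L * (G / L) ^ β⁻¹, fun τ hτ => ?_⟩
  by_cases hq : q τ = 0
  · rw [hq, abs_zero]
    positivity
  obtain ⟨hpτ, hqτ⟩ := h τ hτ hq
  have hpG : p τ ≤ G := (le_abs_self _).trans (hG τ (Ioc_subset_Icc_self hτ))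
  calc |q τ| = β * L * τ ^ 2 * (p τ / L) ^ β⁻¹ := hqτ
    _ ≤ β * L * τ ^ 2 * (G / L) ^ β⁻¹ := by gcongr
    _ = β * L * (G / L) ^ β⁻¹ * τ ^ 2 := by ring

theorem stmt1_general (α : ℝ) (hα : 0 < α)
    (Ψ : ℝ → ℝ → ℝ) (c : ℕ → ℕ → ℝ)
    (hconv : ∃ ε > (0 : ℝ), ∀ r R : ℝ, |r| < ε → |R| < ε →
      HasSum (fun ij : ℕ × ℕ => c ij.1 ij.2 * r ^ ij.1 * R ^ ij.2) (Ψ r R))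
    (hlow : ∀ i j : ℕ, i + j < 3 → c i j = 0)
    (hdens : ∃ L : ℝ, 0 < L ∧
      Filter.Tendsto (fun r : ℝ => deriv (fun s => Ψ s r) r / r ^ 2)
        (nhdsWithin 0 (Ioi 0)) (nhds L))
    (hconstr : ∀ᶠ r in nhdsWithin (0 : ℝ) (Ioi 0),
      deriv (fun R => Ψ r R) r = -(α / (α + 1)) * deriv (fun s => Ψ s r) r)
    (hY : ∀ τ ∈ Ioc (0 : ℝ) 1,
      (∀ᶠ r in nhdsWithin (0 : ℝ) (Ioi 0),
        0 < deriv (fun R => Ψ r R) r * τ ^ 2 / deriv (fun R => Ψ r R) (τ * r)) ∧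
      Filter.Tendsto (fun r : ℝ =>
          (deriv (fun s => Ψ s (τ * r)) r / deriv (fun s => Ψ s r) r) *
            (deriv (fun R => Ψ r R) r * τ ^ 2 / deriv (fun R => Ψ r R) (τ * r))
              ^ (α / (α + 1)))
        (nhdsWithin 0 (Ioi 0)) (nhds 1)) :
    c 2 1 = 0 ∧ c 1 2 = 0 ∧ 0 < c 3 0 ∧ c 0 3 = -(α / (α + 1)) * c 3 0 := by
  obtain ⟨ε, hε, hS⟩ := hconv
  obtain ⟨L, hL, hLt⟩ := hdens
  have hβ : 0 < α / (α + 1) := by positivity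
  have hr₂ : ∀ᶠ r : ℝ in 𝓝[>] 0, r ^ 2 ≠ 0 :=
    eventually_mem_nhdsWithin.mono fun r hr => pow_ne_zero 2 (ne_of_gt hr)
  have ray₁ : ∀ τ, Tendsto (fun r => deriv (fun s => Ψ s (τ * r)) r / r ^ 2) (𝓝[>] 0)
      (𝓝 (3 * c 3 0 + 2 * c 2 1 * τ + c 1 2 * τ ^ 2)) := fun τ => by
    simpa using HasDoublePowerSeries.tendsto_deriv_div_sq hS hε hlow 1 τ
  have ray₂ : ∀ τ, Tendsto (fun r => deriv (fun R => Ψ r R) (τ * r) / r ^ 2) (𝓝[>] 0)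
      (𝓝 (c 2 1 + 2 * c 1 2 * τ + 3 * c 0 3 * τ ^ 2)) := fun τ => by
    have := HasDoublePowerSeries.tendsto_deriv_div_sq (HasDoublePowerSeries.swap hS) hε
      (fun i j h => hlow j i (by omega)) τ 1
    simp only [one_mul, one_pow, mul_one] at this
    convert this using 2
    ring
  have hQ₀ : Tendsto (fun r => deriv (fun R => Ψ r R) r / r ^ 2) (𝓝[>] 0)
      (𝓝 (-(α / (α + 1)) * L)) :=
    (hLt.const_mul _).congr' (hconstr.mono fun r hr => by dsimp only; rw [hr, mul_div_assoc])
  have hL₁ : 3 * c 3 0 + 2 * c 2 1 + c 1 2 = L := tendsto_nhds_unique (by simpa using ray₁ 1) hLt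
  have hL₂ : c 2 1 + 2 * c 1 2 + 3 * c 0 3 = -(α / (α + 1)) * L :=
    tendsto_nhds_unique (by simpa using ray₂ 1) hQ₀
  obtain ⟨K, hK⟩ := exists_abs_le_mul_sq_of_abs_eq (by fun_prop) hL hβ fun τ hτ hq =>
    abs_eq_of_tendsto_ratio hβ hL hq hr₂ (ray₁ τ) hLt (ray₂ τ) hQ₀ (hY τ hτ).1 (hY τ hτ).2
  obtain ⟨h₂₁, h₁₂⟩ := eq_zero_of_abs_le_mul_sq hK
  replace h₁₂ : c 1 2 = 0 := by linarith
  rw [h₂₁, h₁₂] at hL₁ hL₂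
  exact ⟨h₂₁, h₁₂, by linarith, by linear_combination hL₂ / 3 + α / (α + 1) / 3 * hL₁⟩

/-- For `α > 0` and `Ψ` analytic near `(0,0)` with convergent power
series `Ψ(r,R) = Σ c_{ij} r^i R^j`, odd (coefficients of even total degree vanish),
starting at total degree 3, such that
(iii) `lim_{r→0⁺} ∂_rΨ(r,r)/r²` exists in `(0,∞)`,
(iv) `∂_RΨ(r,r) = −(α/(α+1)) ∂_rΨ(r,r)` for small `r > 0`,
(v) for every `τ ∈ (0,1]`, `∂_RΨ(r,r)τ²/∂_RΨ(r,rτ) > 0` for small `r > 0` and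
`lim_{r→0⁺} [∂_rΨ(r,rτ)/∂_rΨ(r,r)]·[∂_RΨ(r,r)τ²/∂_RΨ(r,rτ)]^{α/(α+1)} = 1`,
then `c₂₁ = c₁₂ = 0`, `c₃₀ > 0` and `c₀₃ = −(α/(α+1)) c₃₀`. -/
theorem stmt1 (α : ℝ) (hα : 0 < α)
    (Ψ : ℝ → ℝ → ℝ) (c : ℕ → ℕ → ℝ)
    (hconv : ∃ ε > (0 : ℝ), ∀ r R : ℝ, |r| < ε → |R| < ε →
      HasSum (fun ij : ℕ × ℕ => c ij.1 ij.2 * r ^ ij.1 * R ^ ij.2) (Ψ r R))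
    (hodd : ∀ i j : ℕ, Even (i + j) → c i j = 0)
    (hlow : ∀ i j : ℕ, i + j < 3 → c i j = 0)
    (hdens : ∃ L : ℝ, 0 < L ∧
      Filter.Tendsto (fun r : ℝ => deriv (fun s => Ψ s r) r / r ^ 2)
        (nhdsWithin 0 (Ioi 0)) (nhds L))
    (hconstr : ∀ᶠ r in nhdsWithin (0 : ℝ) (Ioi 0),
      deriv (fun R => Ψ r R) r = -(α / (α + 1)) * deriv (fun s => Ψ s r) r)
    (hY : ∀ τ ∈ Ioc (0 : ℝ) 1,
      (∀ᶠ r in nhdsWithin (0 : ℝ) (Ioi 0),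
        0 < deriv (fun R => Ψ r R) r * τ ^ 2 / deriv (fun R => Ψ r R) (τ * r)) ∧
      Filter.Tendsto (fun r : ℝ =>
          (deriv (fun s => Ψ s (τ * r)) r / deriv (fun s => Ψ s r) r) *
            (deriv (fun R => Ψ r R) r * τ ^ 2 / deriv (fun R => Ψ r R) (τ * r))
              ^ (α / (α + 1)))
        (nhdsWithin 0 (Ioi 0)) (nhds 1)) :
    c 2 1 = 0 ∧ c 1 2 = 0 ∧ 0 < c 3 0 ∧ c 0 3 = -(α / (α + 1)) * c 3 0 :=
  stmt1_general α hα Ψ c hconv hlow hdens hconstr hY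
end

section
/- Let h > 0 and c be real numbers and let Ψ : ℝ × ℝ → ℝ be analytic in a neighborhood of (0,0) with Ψ(r,R) = (h/2)(r³ − c·R³) + φ(r,R), where φ is analytic near (0,0) and all partial derivatives of φ at (0,0) of total order ≤ 4 vanish (i.e. the power series of φ contains only terms of total degree ≥ 5). Then there exist δ > 0 and a unique continuous function R_h : [0,δ) → ℝ with R_h(0) = 0 satisfying R_h(r) = 2Ψ(r, R_h(r)) for all r ∈ [0,δ), and moreover lim_{r→0⁺} R_h(r)/r³ = h. -/
open Set Filter Topology Asymptotics Metric Function
open scoped NNReal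

/-!
Write `2Ψ(r, R) = h r³ - h c R³ + 2φ(r, R)`. For a small radius `ε` and `|r| ≤ ε`, the map
`R ↦ 2Ψ(r, R)` is a `1/2`-contraction of `[-ε, ε]` into `[-ε/2, ε/2]`, because the cubic term
and `φ` both have vanishing derivative at the origin; its fixed point `R_h(r)` depends
continuously on `r`. A continuous solution starting at `0` cannot cross the gap
`ε/2 < |R| ≤ ε`, so it stays in the ball and coincides with `R_h`. Finally `h r³` is an
approximate fixed point with defect `-c h⁴ r⁹ + 2φ(r, h r³) = o(r³)` (as `φ = O(‖·‖⁵)`), and the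
contraction estimate turns this into `R_h(r) - h r³ = o(r³)`.
-/

section Taylor

variable {𝕜 E F : Type*} [NontriviallyNormedField 𝕜]
  [NormedAddCommGroup E] [NormedSpace 𝕜 E] [NormedAddCommGroup F] [NormedSpace 𝕜 F]
  {f : E → F} {x : E}

theorem AnalyticAt.isBigO_norm_pow_of_iteratedFDeriv_eq_zero [CharZero 𝕜] [CompleteSpace F]
    (hf : AnalyticAt 𝕜 f x) {n : ℕ} (hn : ∀ k < n, iteratedFDeriv 𝕜 k f x = 0) :
    (fun y => f (x + y)) =O[𝓝 0] fun y => ‖y‖ ^ n := by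
  obtain ⟨p, r, hp⟩ := hf
  have hsum (y : E) : p.partialSum n y = 0 := Finset.sum_eq_zero fun k hk => by
    have := hp.factorial_smul y k
    rw [hn k (Finset.mem_range.1 hk), ← Nat.cast_smul_eq_nsmul 𝕜, zero_apply,
      smul_eq_zero] at this
    exact this.resolve_left (Nat.cast_ne_zero.2 k.factorial_ne_zero)
  simpa [hsum] using hp.hasFPowerSeriesAt.isBigO_sub_partialSum_pow n

theorem AnalyticAt.hasStrictFDerivAt_zero_of_iteratedFDeriv_one_eq_zero
    (hf : AnalyticAt 𝕜 f x) (h1 : iteratedFDeriv 𝕜 1 f x = 0) :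
    HasStrictFDerivAt f (0 : E →L[𝕜] F) x := by
  have : fderiv 𝕜 f x = 0 := by
    simpa [norm_iteratedFDeriv_one] using congrArg norm h1
  simpa [this] using hf.hasStrictFDerivAt

end Taylor

theorem HasStrictFDerivAt.eventually_lipschitzOnWith_closedBall {E F : Type*}
    [NormedAddCommGroup E] [NormedSpace ℝ E] [NormedAddCommGroup F] [NormedSpace ℝ F]
    {f : E → F} {x : E} (hf : HasStrictFDerivAt f (0 : E →L[ℝ] F) x) {K : ℝ≥0} (hK : 0 < K) :
    ∀ᶠ ε in 𝓝 0, LipschitzOnWith K f (closedBall x ε) := by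
  obtain ⟨s, hs, hlip⟩ := hf.exists_lipschitzOnWith_of_nnnorm_lt K (by simpa using hK)
  exact (eventually_closedBall_subset hs).mono fun _ hε => hlip.mono hε

section FixedPoint

variable {X : Type*} [MetricSpace X] {f : X → X} {K : ℝ≥0} {t : Set X}

theorem LipschitzOnWith.dist_le_of_isFixedPt (hf : LipschitzOnWith K f t) (hK : K < 1)
    {x y : X} (hx : x ∈ t) (hy : y ∈ t) (hfy : IsFixedPt f y) :
    dist x y ≤ dist x (f x) / (1 - K) := by
  rw [le_div_iff₀ (sub_pos.2 (by exact_mod_cast hK))]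
  have := hf.dist_le_mul x hx y hy
  rw [hfy.eq] at this
  linarith [dist_triangle x (f x) y]

theorem LipschitzOnWith.eq_of_isFixedPt (hf : LipschitzOnWith K f t) (hK : K < 1)
    {x y : X} (hx : x ∈ t) (hy : y ∈ t) (hfx : IsFixedPt f x) (hfy : IsFixedPt f y) :
    x = y :=
  dist_le_zero.1 <| by simpa [hfx.eq] using hf.dist_le_of_isFixedPt hK hx hy hfy

theorem LipschitzOnWith.exists_isFixedPt (hf : LipschitzOnWith K f t) (hK : K < 1)
    (ht : IsComplete t) (hne : t.Nonempty) (hmaps : MapsTo f t t) : ∃ y ∈ t, IsFixedPt f y :=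
  let ⟨_, hx⟩ := hne
  let ⟨y, hy, hfy, _⟩ := ContractingWith.exists_fixedPoint' ht hmaps
    ⟨hK, hf.mapsToRestrict hmaps⟩ hx (edist_ne_top _ _)
  ⟨y, hy, hfy⟩

theorem exists_continuousOn_isFixedPt {P : Type*} [TopologicalSpace P] {F : P → X → X}
    {s : Set P} (hK : K < 1) (ht : IsComplete t) (hne : t.Nonempty)
    (hmaps : ∀ p ∈ s, MapsTo (F p) t t) (hlip : ∀ p ∈ s, LipschitzOnWith K (F p) t)
    (hcont : ∀ x ∈ t, ContinuousOn (F · x) s) :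
    ∃ g : P → X, ContinuousOn g s ∧ ∀ p ∈ s, g p ∈ t ∧ IsFixedPt (F p) (g p) := by
  have := hne.to_type
  choose! g hgt hgfix using fun p hp => (hlip p hp).exists_isFixedPt hK ht hne (hmaps p hp)
  refine ⟨g, fun p hp => ?_, fun p hp => ⟨hgt p hp, hgfix p hp⟩⟩
  rw [ContinuousWithinAt, tendsto_iff_dist_tendsto_zero]
  -- `g p` is an approximate fixed point of `F q`, with defect `dist (F q (g p)) (F p (g p))`.
  have hdefect : Tendsto (fun q => dist (F q (g p)) (F p (g p)) / (1 - K)) (𝓝[s] p) (𝓝 0) := by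
    simpa using ((hcont _ (hgt p hp) p hp).dist
      (tendsto_const_nhds (x := F p (g p)))).div_const (1 - (K : ℝ))
  refine squeeze_zero' (.of_forall fun _ => dist_nonneg) ?_ hdefect
  filter_upwards [self_mem_nhdsWithin] with q hq
  rw [dist_comm]
  simpa [(hgfix p hp).eq, dist_comm] using
    (hlip q hq).dist_le_of_isFixedPt hK (hgt p hp) (hgt q hq) (hgfix q hq)

end FixedPoint

theorem IsPreconnected.forall_le_of_le_imp_le {α : Type*} [TopologicalSpace α] {s : Set α}
    {u : α → ℝ} (hs : IsPreconnected s) (hu : ContinuousOn u s) {a b : ℝ} (hab : a < b)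
    {x₀ : α} (hx₀ : x₀ ∈ s) (h₀ : u x₀ ≤ a) (hgap : ∀ x ∈ s, u x ≤ b → u x ≤ a) :
    ∀ x ∈ s, u x ≤ a := by
  intro x hx
  by_contra! hxa
  have hbx : b < u x := lt_of_not_ge fun hxb => hxa.not_ge (hgap x hx hxb)
  obtain ⟨y, hy, hyb⟩ := hs.intermediate_value hx₀ hx hu ⟨h₀.trans hab.le, hbx.le⟩
  exact hab.not_ge (hyb ▸ hgap y hy hyb.le)

theorem Asymptotics.IsLittleO.tendsto_div_of_sub_const_mul {α 𝕜 : Type*} [NormedField 𝕜]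
    {l : Filter α} {f g : α → 𝕜} {a : 𝕜} (h : (fun x => f x - a * g x) =o[l] g)
    (hg : ∀ᶠ x in l, g x ≠ 0) : Tendsto (fun x => f x / g x) l (𝓝 a) := by
  refine (zero_add a ▸ h.tendsto_div_nhds_zero.add_const a).congr' ?_
  filter_upwards [hg] with x hx
  field_simp
  ring

theorem Prod.mk_mem_closedBall_zero_iff {r R ε : ℝ} :
    (r, R) ∈ closedBall (0 : ℝ × ℝ) ε ↔ |r| ≤ ε ∧ |R| ≤ ε := by
  simp [Prod.norm_def]

theorem abs_pow_three_sub_pow_three_le {a x y : ℝ} (hx : |x| ≤ a) (hy : |y| ≤ a) :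
    |x ^ 3 - y ^ 3| ≤ 3 * a ^ 2 * |x - y| := by
  rw [show x ^ 3 - y ^ 3 = (x ^ 2 + x * y + y ^ 2) * (x - y) by ring, abs_mul]
  gcongr
  rw [abs_le] at hx hy ⊢
  constructor <;> nlinarith

/-- The right-hand side `2Ψ(r, R)` of the horizon equation `R = 2Ψ(r, R)`. -/
def horizonMap (h c : ℝ) (φ : ℝ × ℝ → ℝ) (r R : ℝ) : ℝ :=
  h * (r ^ 3 - c * R ^ 3) + 2 * φ (r, R)

/-- The constants make `horizonMap h c φ r` a `1/2`-contraction of `closedBall 0 ε` into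
`closedBall 0 (ε / 2)` for every `|r| ≤ ε`. -/
structure IsHorizonRadius (h c : ℝ) (φ : ℝ × ℝ → ℝ) (ε : ℝ) : Prop where
  pos : 0 < ε
  map_zero : φ 0 = 0
  lipschitzOnWith : LipschitzOnWith (1 / 8) φ (closedBall 0 ε)
  coeff_mul_sq_le : (|h| + 3 * |h * c|) * ε ^ 2 ≤ 1 / 4

theorem exists_isHorizonRadius (h c : ℝ) {φ : ℝ × ℝ → ℝ} (hφ0 : φ 0 = 0)
    (hφ : HasStrictFDerivAt φ (0 : ℝ × ℝ →L[ℝ] ℝ) 0) : ∃ ε, IsHorizonRadius h c φ ε := by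
  have hcoeff : ∀ᶠ ε : ℝ in 𝓝 0, (|h| + 3 * |h * c|) * ε ^ 2 ≤ 1 / 4 :=
    ((continuous_const.mul (continuous_pow 2)).tendsto' 0 0 (by simp)).eventually
      (eventually_le_nhds (by norm_num))
  have hlip := hφ.eventually_lipschitzOnWith_closedBall (K := 1 / 8) (by norm_num)
  obtain ⟨ε, hε, hlip, hcoeff⟩ := (eventually_mem_nhdsWithin.and
    ((hlip.and hcoeff).filter_mono nhdsWithin_le_nhds)).exists (f := 𝓝[>] (0 : ℝ))
  exact ⟨ε, ⟨hε, hφ0, hlip, hcoeff⟩⟩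

theorem isLittleO_horizonMap_sub (h c : ℝ) {φ : ℝ × ℝ → ℝ}
    (hφ : φ =O[𝓝 0] fun y => ‖y‖ ^ 5) :
    (fun r => horizonMap h c φ r (h * r ^ 3) - h * r ^ 3) =o[𝓝 0] fun r => r ^ 3 := by
  have hcube : (fun r : ℝ => -(c * h ^ 4) * r ^ 9) =o[𝓝 0] fun r => r ^ 3 :=
    (isLittleO_pow_pow (by norm_num)).const_mul_left _
  have hpair : (fun r : ℝ => (r, h * r ^ 3)) =O[𝓝 0] fun r => r :=
    (isBigO_refl _ _).prod_left ((isLittleO_pow_id (by norm_num)).isBigO.const_mul_left h)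
  have hφr : (fun r : ℝ => φ (r, h * r ^ 3)) =o[𝓝 0] fun r => r ^ 3 :=
    (hφ.comp_tendsto (Continuous.tendsto' (by fun_prop) 0 0 (by simp))).trans_isLittleO
      ((hpair.norm_left.pow 5).trans_isLittleO (isLittleO_pow_pow (by norm_num)))
  refine (hcube.add (hφr.const_mul_left 2)).congr_left fun r => ?_
  rw [horizonMap]
  ring

namespace IsHorizonRadius

variable {h c ε r : ℝ} {φ : ℝ × ℝ → ℝ} {g : ℝ → ℝ}

theorem abs_apply_le (hε : IsHorizonRadius h c φ ε) {R : ℝ} (hr : |r| ≤ ε) (hR : |R| ≤ ε) :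
    |φ (r, R)| ≤ ε / 8 := by
  have hmem := Prod.mk_mem_closedBall_zero_iff.2 ⟨hr, hR⟩
  have := hε.lipschitzOnWith.dist_le_mul _ hmem 0 (mem_closedBall_self hε.pos.le)
  rw [hε.map_zero, dist_zero_right, dist_zero_right, Real.norm_eq_abs] at this
  calc |φ (r, R)| ≤ 1 / 8 * ‖(r, R)‖ := by exact_mod_cast this
    _ ≤ ε / 8 := by linarith [mem_closedBall_zero_iff.1 hmem]

theorem mapsTo_horizonMap (hε : IsHorizonRadius h c φ ε) (hr : |r| ≤ ε) :
    MapsTo (horizonMap h c φ r) (closedBall 0 ε) (closedBall 0 (ε / 2)) := by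
  intro R hR
  simp only [mem_closedBall_zero_iff, Real.norm_eq_abs] at hR ⊢
  have hφ := hε.abs_apply_le hr hR
  have hr3 : |r| ^ 3 ≤ ε ^ 3 := pow_le_pow_left₀ (abs_nonneg r) hr 3
  have hR3 : |R| ^ 3 ≤ ε ^ 3 := pow_le_pow_left₀ (abs_nonneg R) hR 3
  have hcoeff : (|h| + |h * c|) * ε ^ 3 ≤ ε / 4 := by
    have := mul_le_mul_of_nonneg_right hε.coeff_mul_sq_le hε.pos.le
    nlinarith [mul_nonneg (abs_nonneg (h * c)) (pow_nonneg hε.pos.le 3)]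
  calc |horizonMap h c φ r R| ≤ |h| * |r| ^ 3 + |h * c| * |R| ^ 3 + 2 * |φ (r, R)| := by
        rw [horizonMap, ← abs_pow, ← abs_pow, ← abs_mul, ← abs_mul]
        refine (abs_add_le _ _).trans ?_
        rw [abs_mul 2, abs_two, mul_sub, ← mul_assoc]
        linarith [abs_sub (h * r ^ 3) (h * c * R ^ 3)]
    _ ≤ ε / 2 := by nlinarith [abs_nonneg h, abs_nonneg (h * c)]

theorem lipschitzOnWith_horizonMap (hε : IsHorizonRadius h c φ ε) (hr : |r| ≤ ε) :
    LipschitzOnWith (1 / 2) (horizonMap h c φ r) (closedBall 0 ε) := by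
  refine LipschitzOnWith.of_dist_le_mul fun x hx y hy => ?_
  simp only [mem_closedBall_zero_iff, Real.norm_eq_abs] at hx hy
  have hφ : |φ (r, x) - φ (r, y)| ≤ 1 / 8 * |x - y| := by
    simpa [Real.dist_eq] using hε.lipschitzOnWith.dist_le_mul _
      (Prod.mk_mem_closedBall_zero_iff.2 ⟨hr, hx⟩) _ (Prod.mk_mem_closedBall_zero_iff.2 ⟨hr, hy⟩)
  have hcube := abs_pow_three_sub_pow_three_le hx hy
  rw [Real.dist_eq, Real.dist_eq]
  calc |horizonMap h c φ r x - horizonMap h c φ r y|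
      = |-(h * c) * (x ^ 3 - y ^ 3) + 2 * (φ (r, x) - φ (r, y))| := by
        rw [horizonMap, horizonMap]; ring_nf
    _ ≤ |h * c| * (3 * ε ^ 2 * |x - y|) + 2 * (1 / 8 * |x - y|) := by
        refine (abs_add_le _ _).trans ?_
        rw [abs_mul, abs_mul, abs_neg, abs_two]
        gcongr
    _ ≤ (1 / 2 : ℝ≥0) * |x - y| := by
        have : 3 * |h * c| * ε ^ 2 ≤ 1 / 4 := by
          nlinarith [hε.coeff_mul_sq_le, abs_nonneg h, sq_nonneg ε]
        push_cast
        nlinarith [mul_le_mul_of_nonneg_right this (abs_nonneg (x - y))]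

theorem continuousOn_horizonMap (hε : IsHorizonRadius h c φ ε) {R : ℝ}
    (hR : R ∈ closedBall 0 ε) : ContinuousOn (horizonMap h c φ · R) (closedBall 0 ε) := by
  have hφ : ContinuousOn (fun r => φ (r, R)) (closedBall 0 ε) :=
    hε.lipschitzOnWith.continuousOn.comp (by fun_prop) fun r hr =>
      Prod.mk_mem_closedBall_zero_iff.2 ⟨by simpa using hr, by simpa using hR⟩
  exact ContinuousOn.add (by fun_prop) (continuousOn_const.mul hφ)

theorem exists_continuousOn_isFixedPt (hε : IsHorizonRadius h c φ ε) :
    ∃ g : ℝ → ℝ, ContinuousOn g (closedBall 0 ε) ∧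
      ∀ r ∈ closedBall 0 ε, g r ∈ closedBall 0 ε ∧ IsFixedPt (horizonMap h c φ r) (g r) :=
  _root_.exists_continuousOn_isFixedPt (K := 1 / 2) (by norm_num) isClosed_closedBall.isComplete
    (nonempty_closedBall.2 hε.pos.le)
    (fun r hr => (hε.mapsTo_horizonMap (by simpa using hr)).mono_right
      (closedBall_subset_closedBall (by linarith [hε.pos])))
    (fun r hr => hε.lipschitzOnWith_horizonMap (by simpa using hr))
    (fun _ hR => hε.continuousOn_horizonMap hR)

theorem eq_of_isFixedPt (hε : IsHorizonRadius h c φ ε)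
    (hg : ∀ r ∈ closedBall 0 ε, g r ∈ closedBall 0 ε ∧ IsFixedPt (horizonMap h c φ r) (g r))
    {R : ℝ} (hr : |r| ≤ ε) (hR : |R| ≤ ε) (hfix : IsFixedPt (horizonMap h c φ r) R) :
    R = g r :=
  have hr' : r ∈ closedBall 0 ε := by simpa using hr
  (hε.lipschitzOnWith_horizonMap hr).eq_of_isFixedPt (by norm_num) (by simpa using hR)
    (hg r hr').1 hfix (hg r hr').2

theorem isFixedPt_zero (hε : IsHorizonRadius h c φ ε) : IsFixedPt (horizonMap h c φ 0) 0 := by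
  rw [IsFixedPt, horizonMap, Prod.mk_zero_zero, hε.map_zero]
  ring

theorem eqOn_of_continuousOn (hε : IsHorizonRadius h c φ ε)
    (hg : ∀ r ∈ closedBall 0 ε, g r ∈ closedBall 0 ε ∧ IsFixedPt (horizonMap h c φ r) (g r))
    {R : ℝ → ℝ} (hR : ContinuousOn R (Ico 0 ε)) (hR0 : R 0 = 0)
    (hRfix : ∀ r ∈ Ico 0 ε, R r = horizonMap h c φ r (R r)) : EqOn R g (Ico 0 ε) := by
  have habs : ∀ r ∈ Ico 0 ε, |r| ≤ ε := fun r hr => by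
    rw [abs_of_nonneg hr.1]; exact hr.2.le
  have hhalf : ∀ r ∈ Ico 0 ε, |R r| ≤ ε / 2 :=
    isPreconnected_Ico.forall_le_of_le_imp_le hR.abs (half_lt_self hε.pos)
      (left_mem_Ico.2 hε.pos) (by simpa [hR0] using (half_pos hε.pos).le) fun r hr hRr => by
        have := hε.mapsTo_horizonMap (habs r hr) (x := R r) (by simpa using hRr)
        rwa [← hRfix r hr, mem_closedBall_zero_iff, Real.norm_eq_abs] at this
  exact fun r hr => hε.eq_of_isFixedPt hg (habs r hr)
    ((hhalf r hr).trans (half_le_self hε.pos.le)) (hRfix r hr).symm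

theorem tendsto_div_pow_three (hε : IsHorizonRadius h c φ ε)
    (hφ : φ =O[𝓝 0] fun y => ‖y‖ ^ 5)
    (hg : ∀ r ∈ closedBall 0 ε, g r ∈ closedBall 0 ε ∧ IsFixedPt (horizonMap h c φ r) (g r)) :
    Tendsto (fun r => g r / r ^ 3) (𝓝[>] 0) (𝓝 h) := by
  refine IsLittleO.tendsto_div_of_sub_const_mul ?_
    (eventually_mem_nhdsWithin.mono fun r hr => pow_ne_zero 3 (ne_of_gt hr))
  refine IsBigO.trans_isLittleO (.of_bound 2 ?_)
    ((isLittleO_horizonMap_sub h c hφ).mono nhdsWithin_le_nhds)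
  filter_upwards [Ioo_mem_nhdsGT hε.pos] with r hr
  have hr' : |r| ≤ ε := by rw [abs_of_pos hr.1]; exact hr.2.le
  have hhr : h * r ^ 3 ∈ closedBall 0 ε := by
    have := mul_le_mul_of_nonneg_right hε.coeff_mul_sq_le hε.pos.le
    rw [mem_closedBall_zero_iff, Real.norm_eq_abs, abs_mul, abs_pow]
    nlinarith [mul_le_mul_of_nonneg_left (pow_le_pow_left₀ (abs_nonneg r) hr' 3) (abs_nonneg h),
      mul_nonneg (abs_nonneg (h * c)) (pow_nonneg hε.pos.le 3), hε.pos]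
  have := (hε.lipschitzOnWith_horizonMap hr').dist_le_of_isFixedPt (by norm_num)
    hhr (hg r (by simpa using hr')).1 (hg r (by simpa using hr')).2
  rw [Real.dist_eq, Real.dist_eq, abs_sub_comm, abs_sub_comm (h * r ^ 3)] at this
  norm_num at this
  simpa [div_eq_mul_inv, mul_comm] using this

end IsHorizonRadius

theorem stmt3_general (h c : ℝ)
    (Ψ φ : ℝ × ℝ → ℝ)
    (hφ : AnalyticAt ℝ φ (0, 0))
    (hφ4 : ∀ k : ℕ, k ≤ 4 → iteratedFDeriv ℝ k φ (0, 0) = 0)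
    (hΨ : ∀ r R : ℝ, Ψ (r, R) = h / 2 * (r ^ 3 - c * R ^ 3) + φ (r, R)) :
    ∃ δ > (0 : ℝ), ∃ Rh : ℝ → ℝ,
      (ContinuousOn Rh (Ico 0 δ) ∧ Rh 0 = 0 ∧
        ∀ r ∈ Ico (0 : ℝ) δ, Rh r = 2 * Ψ (r, Rh r)) ∧
      (∀ Rh' : ℝ → ℝ, ContinuousOn Rh' (Ico 0 δ) → Rh' 0 = 0 →
        (∀ r ∈ Ico (0 : ℝ) δ, Rh' r = 2 * Ψ (r, Rh' r)) →
        EqOn Rh' Rh (Ico 0 δ)) ∧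
      Filter.Tendsto (fun r : ℝ => Rh r / r ^ 3) (nhdsWithin 0 (Ioi 0)) (nhds h) := by
  have hF (r R : ℝ) : 2 * Ψ (r, R) = horizonMap h c φ r R := by
    rw [hΨ, horizonMap]; ring
  simp only [hF]
  rw [Prod.mk_zero_zero] at hφ hφ4
  have hφ5 : φ =O[𝓝 0] fun y => ‖y‖ ^ 5 := by
    simpa using hφ.isBigO_norm_pow_of_iteratedFDeriv_eq_zero fun k hk => hφ4 k (by omega)
  obtain ⟨ε, hε⟩ := exists_isHorizonRadius h c
    (IsBigO.eq_zero_of_norm_pow (n := 5) (by simpa using hφ5) (by norm_num))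
    (hφ.hasStrictFDerivAt_zero_of_iteratedFDeriv_one_eq_zero (hφ4 1 (by norm_num)))
  obtain ⟨g, hg_cont, hg⟩ := hε.exists_continuousOn_isFixedPt
  have hIco : Ico 0 ε ⊆ closedBall 0 ε := fun r hr => by
    simpa [abs_of_nonneg hr.1] using hr.2.le
  refine ⟨ε, hε.pos, g, ⟨hg_cont.mono hIco, ?_, fun r hr => (hg r (hIco hr)).2.symm⟩,
    fun R hR hR0 hRfix => hε.eqOn_of_continuousOn hg hR hR0 hRfix,
    hε.tendsto_div_pow_three hφ5 hg⟩
  exact (hε.eq_of_isFixedPt hg (by simpa using hε.pos.le) (by simpa using hε.pos.le)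
    hε.isFixedPt_zero).symm

/-- If `h > 0`, `Ψ(r,R) = (h/2)(r³ − c·R³) + φ(r,R)` with `φ` analytic
near `(0,0)` and all partial derivatives of `φ` at `(0,0)` of total order `≤ 4`
vanishing, then there are `δ > 0` and a unique continuous `R_h : [0,δ) → ℝ` with
`R_h(0) = 0` and `R_h(r) = 2Ψ(r, R_h(r))` on `[0,δ)`, and `lim_{r→0⁺} R_h(r)/r³ = h`. -/
theorem stmt3 (h c : ℝ) (hh : 0 < h)
    (Ψ φ : ℝ × ℝ → ℝ)
    (hφ : AnalyticAt ℝ φ (0, 0))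
    (hφ4 : ∀ k : ℕ, k ≤ 4 → iteratedFDeriv ℝ k φ (0, 0) = 0)
    (hΨ : ∀ r R : ℝ, Ψ (r, R) = h / 2 * (r ^ 3 - c * R ^ 3) + φ (r, R)) :
    ∃ δ > (0 : ℝ), ∃ Rh : ℝ → ℝ,
      (ContinuousOn Rh (Ico 0 δ) ∧ Rh 0 = 0 ∧
        ∀ r ∈ Ico (0 : ℝ) δ, Rh r = 2 * Ψ (r, Rh r)) ∧
      (∀ Rh' : ℝ → ℝ, ContinuousOn Rh' (Ico 0 δ) → Rh' 0 = 0 →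
        (∀ r ∈ Ico (0 : ℝ) δ, Rh' r = 2 * Ψ (r, Rh' r)) →
        EqOn Rh' Rh (Ico 0 δ)) ∧
      Filter.Tendsto (fun r : ℝ => Rh r / r ^ 3) (nhdsWithin 0 (Ioi 0)) (nhds h) :=
  stmt3_general h c Ψ φ hφ hφ4 hΨ
end

section
/- Let a < b be reals and let p, ε, ν : [a,b] → ℝ be differentiable functions with 0 < p(s) ≤ ε(s) for all s, p nondecreasing, and ν'(s) = −p'(s)/(ε(s) + p(s)) for all s ∈ [a,b]. Then for all s, t ∈ [a,b] with s ≤ t one has e^{−ν(t)} ≤ e^{−ν(s)} · √(p(t)/p(s)). -/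
open Set

/-!
Since `p' ≥ 0` and `ε + p ≥ 2p`, the derivative of `ν` satisfies
`-ν' = p'/(ε + p) ≤ p'/(2p)`, which is the derivative of `log √p`. Hence `-ν - (log p)/2`
is nonincreasing, and exponentiating the resulting inequality between `s ≤ t` gives the bound.
-/

lemma div_add_le_div_two_mul {d p ε : ℝ} (hd : 0 ≤ d) (hp : 0 < p) (hpε : p ≤ ε) :
    d / (ε + p) ≤ d / (2 * p) :=
  div_le_div_of_nonneg_left hd (by positivity) (by linarith)

lemma HasDerivWithinAt.nonneg_of_monotoneOn_of_mem_interior {D : Set ℝ} {g : ℝ → ℝ}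
    {g' x : ℝ} (hx : x ∈ interior D) (hd : HasDerivWithinAt g g' D x) (hg : MonotoneOn g D) :
    0 ≤ g' := by
  have hacc : AccPt x (Filter.principal D) := by
    simpa using (PerfectSpace.univ_preperfect x (mem_univ x)).nhds_inter
      (mem_interior_iff_mem_nhds.mp hx)
  exact hd.nonneg_of_monotoneOn hacc hg

section PressureBound

variable {D : Set ℝ} {p ν : ℝ → ℝ}

lemma hasDerivWithinAt_neg_sub_half_log {x d e : ℝ} (hpx : 0 < p x)
    (hp : HasDerivWithinAt p d D x) (hν : HasDerivWithinAt ν (-d / (e + p x)) D x) :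
    HasDerivWithinAt (fun y ↦ -ν y - Real.log (p y) / 2) (d / (e + p x) - d / (2 * p x)) D x :=
  (hν.neg.sub ((hp.log hpx.ne').div_const 2)).congr_deriv (by ring)

lemma antitoneOn_neg_sub_half_log {ε p' : ℝ → ℝ} (hD : Convex ℝ D)
    (hpε : ∀ x ∈ D, 0 < p x ∧ p x ≤ ε x) (hpmono : MonotoneOn p D)
    (hp : ∀ x ∈ D, HasDerivWithinAt p (p' x) D x)
    (hν : ∀ x ∈ D, HasDerivWithinAt ν (-(p' x) / (ε x + p x)) D x) :
    AntitoneOn (fun y ↦ -ν y - Real.log (p y) / 2) D := by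
  have hderiv {x} (hx : x ∈ D) :=
    hasDerivWithinAt_neg_sub_half_log (hpε x hx).1 (hp x hx) (hν x hx)
  refine antitoneOn_of_hasDerivWithinAt_nonpos hD
    (fun x hx ↦ (hderiv hx).continuousWithinAt)
    (fun x hx ↦ (hderiv (interior_subset hx)).mono interior_subset) fun x hx ↦ ?_
  have hxD := interior_subset hx
  have hp'_nonneg : 0 ≤ p' x := (hp x hxD).nonneg_of_monotoneOn_of_mem_interior hx hpmono
  linarith [div_add_le_div_two_mul hp'_nonneg (hpε x hxD).1 (hpε x hxD).2]

end PressureBound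

lemma exp_neg_le_exp_neg_mul_sqrt_div {νs νt ps pt : ℝ} (hps : 0 < ps) (hpt : 0 < pt)
    (h : -νt - Real.log pt / 2 ≤ -νs - Real.log ps / 2) :
    Real.exp (-νt) ≤ Real.exp (-νs) * Real.sqrt (pt / ps) := by
  have hsqrt : Real.sqrt (pt / ps) = Real.exp ((Real.log pt - Real.log ps) / 2) := by
    rw [← Real.log_div hpt.ne' hps.ne', ← Real.log_sqrt (by positivity),
      Real.exp_log (Real.sqrt_pos.2 (by positivity))]
  rw [hsqrt, ← Real.exp_add, Real.exp_le_exp]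
  linarith

theorem stmt6_general (a b : ℝ) (p ε ν p' : ℝ → ℝ)
    (hpε : ∀ s ∈ Icc a b, 0 < p s ∧ p s ≤ ε s)
    (hpmono : MonotoneOn p (Icc a b))
    (hp : ∀ s ∈ Icc a b, HasDerivWithinAt p (p' s) (Icc a b) s)
    (hν : ∀ s ∈ Icc a b, HasDerivWithinAt ν (-(p' s) / (ε s + p s)) (Icc a b) s) :
    ∀ s ∈ Icc a b, ∀ t ∈ Icc a b, s ≤ t →
      Real.exp (-ν t) ≤ Real.exp (-ν s) * Real.sqrt (p t / p s) := by
  intro s hs t ht hst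
  exact exp_neg_le_exp_neg_mul_sqrt_div (hpε s hs).1 (hpε t ht).1
    (antitoneOn_neg_sub_half_log (convex_Icc a b) hpε hpmono hp hν hs ht hst)

/-- If `0 < p ≤ ε` on `[a,b]`, `p` is nondecreasing, `ε` is
differentiable, and `ν' = −p'/(ε + p)` on `[a,b]`, then for `s ≤ t` in `[a,b]`,
`e^{−ν(t)} ≤ e^{−ν(s)}·√(p(t)/p(s))`. -/
theorem stmt6 (a b : ℝ) (hab : a < b) (p ε ν p' : ℝ → ℝ)
    (hpε : ∀ s ∈ Icc a b, 0 < p s ∧ p s ≤ ε s)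
    (hpmono : MonotoneOn p (Icc a b))
    (hp : ∀ s ∈ Icc a b, HasDerivWithinAt p (p' s) (Icc a b) s)
    (hε : DifferentiableOn ℝ ε (Icc a b))
    (hν : ∀ s ∈ Icc a b, HasDerivWithinAt ν (-(p' s) / (ε s + p s)) (Icc a b) s) :
    ∀ s ∈ Icc a b, ∀ t ∈ Icc a b, s ≤ t →
      Real.exp (-ν t) ≤ Real.exp (-ν s) * Real.sqrt (p t / p s) :=
  stmt6_general a b p ε ν p' hpε hpmono hp hν
end

section
/- Let ρ̄ ≥ 0 and let ε : [ρ̄,∞) → ℝ be continuously differentiable with ε ≥ 0, and set p(ρ) = ρ·ε'(ρ) − ε(ρ). Assume lim_{ρ→∞} ε'(ρ) = +∞ and that p is nondecreasing on [ρ₁,∞) for some ρ₁ ≥ ρ̄. Then lim_{ρ→∞} p(ρ) = +∞. -/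
open Set

/-- If `ρ̄ ≥ 0`, `ε` is `C¹` on `[ρ̄,∞)` with `ε ≥ 0`,
`p(ρ) = ρ·ε'(ρ) − ε(ρ)`, `ε'(ρ) → +∞` as `ρ → ∞`, and `p` is nondecreasing on
`[ρ₁,∞)` for some `ρ₁ ≥ ρ̄`, then `p(ρ) → +∞` as `ρ → ∞`. -/
theorem stmt8 (ρbar ρ₁ : ℝ) (hρbar : 0 ≤ ρbar) (hρ₁ : ρbar ≤ ρ₁)
    (ε ε' p : ℝ → ℝ)
    (hderiv : ∀ ρ ∈ Ici ρbar, HasDerivWithinAt ε (ε' ρ) (Ici ρbar) ρ)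
    (hcont : ContinuousOn ε' (Ici ρbar))
    (hεpos : ∀ ρ ∈ Ici ρbar, 0 ≤ ε ρ)
    (hp : ∀ ρ, p ρ = ρ * ε' ρ - ε ρ)
    (hlim : Filter.Tendsto ε' Filter.atTop Filter.atTop)
    (hmono : MonotoneOn p (Ici ρ₁)) :
    Filter.Tendsto p Filter.atTop Filter.atTop := by
  -- It suffices to show p is unbounded above on [ρ₁, ∞)
  rw [Filter.tendsto_atTop]
  intro b
  -- claim: there exists ρ₂ ≥ ρ₁ with b ≤ p ρ₂
  suffices h : ∃ ρ₂, ρ₁ ≤ ρ₂ ∧ b ≤ p ρ₂ by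
    obtain ⟨ρ₂, hρ₂, hbp⟩ := h
    filter_upwards [Filter.eventually_ge_atTop ρ₂] with ρ hρ
    exact hbp.trans (hmono hρ₂ (hρ₂.trans hρ) hρ)
  by_contra hcon
  push_neg at hcon
  -- so p ρ < b for all ρ ≥ ρ₁; set l = max b 0 ≥ 0, a = ρ₁ + 1 > 0
  set l : ℝ := max b 0 with hl
  have hl0 : 0 ≤ l := le_max_right _ _
  have hpl : ∀ ρ, ρ₁ ≤ ρ → p ρ ≤ l := fun ρ hρ =>
    ((hcon ρ hρ).le).trans (le_max_left _ _)
  set a : ℝ := ρ₁ + 1 with ha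
  have ha1 : ρ₁ ≤ a := by linarith
  have ha0 : 0 < a := by linarith [hρbar.trans hρ₁]
  have habar : ρbar ≤ a := hρ₁.trans ha1
  -- ε is differentiable (as HasDerivAt) at every ρ > a
  have hderivAt : ∀ ρ, a < ρ → HasDerivAt ε (ε' ρ) ρ := by
    intro ρ hρ
    have hmem : ρ ∈ Ici ρbar := le_of_lt (lt_of_le_of_lt habar hρ)
    exact (hderiv ρ hmem).hasDerivAt (Ici_mem_nhds (lt_of_le_of_lt habar hρ))
  -- the function h = (ε + l)/ρ is antitone on [a, ∞)
  set h : ℝ → ℝ := fun ρ => (ε ρ + l) / ρ with hh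
  have hεcont : ContinuousOn ε (Ici ρbar) := fun x hx =>
    (hderiv x hx).continuousWithinAt
  have hhcont : ContinuousOn h (Ici a) := by
    apply ContinuousOn.div
    · exact ((hεcont.mono (Ici_subset_Ici.mpr habar)).add continuousOn_const)
    · exact continuousOn_id
    · intro x hx; exact ne_of_gt (lt_of_lt_of_le ha0 hx)
  have hanti : AntitoneOn h (Ici a) := by
    apply antitoneOn_of_hasDerivWithinAt_nonpos (convex_Ici a) hhcont
      (f' := fun ρ => ((ε' ρ) * ρ - (ε ρ + l) * 1) / ρ ^ 2)
    · intro x hx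
      rw [interior_Ici] at hx
      have hx0 : x ≠ 0 := ne_of_gt (lt_trans ha0 hx)
      exact (((hderivAt x hx).add_const l).div (hasDerivAt_id x) hx0).hasDerivWithinAt
    · intro x hx
      rw [interior_Ici] at hx
      have hx1 : ρ₁ ≤ x := le_of_lt (lt_of_le_of_lt ha1 hx)
      have hnum : ε' x * x - (ε x + l) * 1 ≤ 0 := by
        have := hpl x hx1
        rw [hp x] at this
        nlinarith
      exact div_nonpos_of_nonpos_of_nonneg hnum (sq_nonneg x)
  -- hence ε ρ ≤ C ρ where C = h a, and ε' is bounded: contradiction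
  set C : ℝ := h a with hC
  have hbound : ∀ ρ, a ≤ ρ → ε' ρ ≤ l / a + C := by
    intro ρ hρ
    have hρ0 : 0 < ρ := lt_of_lt_of_le ha0 hρ
    have hhρ : h ρ ≤ C := hanti (le_refl a : a ∈ Ici a) hρ hρ
    have hεle : ε ρ + l ≤ C * ρ := by
      rw [hh] at hhρ
      calc ε ρ + l = ((ε ρ + l) / ρ) * ρ := by field_simp
        _ ≤ C * ρ := by
            exact mul_le_mul_of_nonneg_right hhρ hρ0.le
    have hpρ : p ρ ≤ l := hpl ρ (ha1.trans hρ)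
    rw [hp ρ] at hpρ
    -- ρ ε' ρ ≤ l + ε ρ ≤ l + (C ρ - l) = C ρ... more precisely:
    have : ρ * ε' ρ ≤ l + ε ρ := by linarith
    have h2 : ρ * ε' ρ ≤ (l / a) * ρ + C * ρ := by
      have hla : l ≤ (l / a) * ρ := by
        rw [div_mul_eq_mul_div, le_div_iff₀ ha0]
        nlinarith
      nlinarith
    nlinarith
  obtain ⟨ρ, hρa, hρb⟩ := ((hlim.eventually_ge_atTop (l / a + C + 1)).and
    (Filter.eventually_ge_atTop a)).exists
  linarith [hbound ρ hρb]
end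

section
/- Let α, u, Y, Ψ_r, Ψ_R be real numbers with α ≠ 0, α ≠ −1, u ≠ 0, Ψ_r ≠ 0, Ψ_R ≠ 0, and define a = (1/((α+1)Ψ_R))·(1 − α(Y/u)²), b = (Y/u)²/Ψ_r, c = −((α+1)Ψ_R/(α·Ψ_r²))·(Y/u)². Then a·c − b² = −(1/α)·(Y/(u·Ψ_r))². In particular, a·c − b² < 0 whenever α > 0 and Y ≠ 0, and a·c − b² > 0 whenever α < 0 and Y ≠ 0. -/
/-- For the coefficients `a, b, c` of the quasi-linear PDE governing
barotropic perfect-fluid collapse in area-radius coordinates,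
`a·c − b² = −(1/α)·(Y/(u·Ψ_r))²`; in particular the discriminant is negative for
`α > 0` (hyperbolic) and positive for `α < 0` (elliptic), whenever `Y ≠ 0`. -/
theorem stmt11 (α u Y Ψr ΨR a b c : ℝ)
    (hα : α ≠ 0) (hα1 : α ≠ -1) (hu : u ≠ 0) (hΨr : Ψr ≠ 0) (hΨR : ΨR ≠ 0)
    (ha : a = 1 / ((α + 1) * ΨR) * (1 - α * (Y / u) ^ 2))
    (hb : b = (Y / u) ^ 2 / Ψr)
    (hc : c = -((α + 1) * ΨR / (α * Ψr ^ 2)) * (Y / u) ^ 2) :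
    a * c - b ^ 2 = -(1 / α) * (Y / (u * Ψr)) ^ 2 ∧
    (0 < α → Y ≠ 0 → a * c - b ^ 2 < 0) ∧
    (α < 0 → Y ≠ 0 → 0 < a * c - b ^ 2) := by
  have hα1' : α + 1 ≠ 0 := by intro h; apply hα1; linarith
  have key : a * c - b ^ 2 = -(1 / α) * (Y / (u * Ψr)) ^ 2 := by
    subst ha hb hc
    field_simp
    ring
  refine ⟨key, ?_, ?_⟩
  · intro hpos hY
    rw [key]
    have h2 : (Y / (u * Ψr)) ^ 2 > 0 := by positivity
    have : -(1 / α) < 0 := by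
      simp only [neg_neg, neg_lt, neg_zero]
      positivity
    nlinarith
  · intro hneg hY
    rw [key]
    have h2 : (Y / (u * Ψr)) ^ 2 > 0 := by positivity
    have : 0 < -(1 / α) := by
      simp only [lt_neg, neg_zero]
      exact div_neg_of_pos_of_neg one_pos hneg
    positivity
end

section
/- Let Ψ : ℝ × ℝ → ℝ be analytic in a neighborhood of (0,0) with power series coefficients c_{ij} (the coefficient of r^i R^j). Assume c_{ij} = 0 whenever i + j is even or i + j < 3, and assume c_{21} = c_{12} = 0. If for some τ > 0 the function r ↦ ∂_RΨ(r, r³τ)/r⁶ remains bounded as r → 0⁺, then c_{41} = 0. -/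
/-!
Along the curve `R = τ r³` the termwise `R`-derivative of the double series is again a power
series in `r`, namely `∑ c_{ij} j τ^{j-1} r^{i+3(j-1)}`. The parity and low-order conditions,
together with `c₂₁ = c₁₂ = 0`, leave `(4,1)` as the only index of `r`-order below `6`, so
`∂_RΨ(r, τr³) = c₄₁ r⁴ + O(r⁶)`; boundedness of `∂_RΨ(r, τr³) / r⁶` then forces `c₄₁ = 0`.
-/

open Set Filter Topology Asymptotics

lemma exists_nat_mul_pow_pred_le {σ ρ : ℝ} (hσ : 0 < σ) (hσρ : σ < ρ) :
    ∃ C, ∀ k : ℕ, k * σ ^ (k - 1) ≤ C * ρ ^ k := by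
  have hρ : 0 < ρ := hσ.trans hσρ
  have hq : ‖σ / ρ‖ < 1 := by
    rw [Real.norm_of_nonneg (by positivity), div_lt_one hρ]; exact hσρ
  have hS := summable_pow_mul_geometric_of_norm_lt_one 1 hq
  refine ⟨(∑' k : ℕ, (k : ℝ) ^ 1 * (σ / ρ) ^ k) / σ, fun k => ?_⟩
  have hk := hS.le_tsum k fun j _ => by positivity
  rcases k with _ | k
  · simp only [CharP.cast_eq_zero, zero_mul, pow_zero, mul_one]
    exact div_nonneg ((by positivity : (0:ℝ) ≤ _).trans hk) hσ.le
  · rw [div_mul_eq_mul_div, le_div_iff₀ hσ, Nat.add_sub_cancel]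
    calc ((k + 1 : ℕ) : ℝ) * σ ^ k * σ
        = ((k + 1 : ℕ) : ℝ) ^ 1 * (σ / ρ) ^ (k + 1) * ρ ^ (k + 1) := by
          rw [div_pow]; field_simp; ring
      _ ≤ _ := by gcongr

lemma eq_zero_of_mul_pow_isBigO {c : ℝ} {k m : ℕ} (hkm : k < m)
    (h : (fun x : ℝ => c * x ^ k) =O[𝓝[>] 0] fun x => x ^ m) : c = 0 := by
  have hlo : (fun x : ℝ => c * x ^ k) =o[𝓝[>] 0] fun x => x ^ k :=
    h.trans_isLittleO ((isLittleO_pow_pow hkm).mono nhdsWithin_le_nhds)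
  have hlim := hlo.tendsto_div_nhds_zero
  refine tendsto_nhds_unique (tendsto_const_nhds.congr' ?_) hlim
  filter_upwards [self_mem_nhdsWithin] with x hx
  rw [mul_div_cancel_right₀ _ (pow_ne_zero _ (ne_of_gt hx))]

section GeneralizedPowerSeries

variable {ι : Type*} {a : ι → ℝ} {n : ι → ℕ} {ρ : ℝ}

lemma summable_abs_mul_nat_mul_pow_pred (ha : Summable fun i => |a i| * ρ ^ n i) {σ : ℝ}
    (hσ : 0 < σ) (hσρ : σ < ρ) : Summable fun i => |a i| * n i * σ ^ (n i - 1) := by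
  obtain ⟨C, hC⟩ := exists_nat_mul_pow_pred_le hσ hσρ
  refine .of_nonneg_of_le (fun i => by positivity) (fun i => ?_) (ha.mul_left C)
  rw [mul_assoc, mul_left_comm C]
  exact mul_le_mul_of_nonneg_left (hC _) (abs_nonneg _)

lemma hasDerivAt_tsum_mul_pow (ha : Summable fun i => |a i| * ρ ^ n i) {x : ℝ} (hx : |x| < ρ) :
    HasDerivAt (fun y => ∑' i, a i * y ^ n i) (∑' i, a i * n i * x ^ (n i - 1)) x := by
  set σ := (|x| + ρ) / 2
  have hxσ : |x| < σ := by simp only [σ]; linarith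
  have hσρ : σ < ρ := by simp only [σ]; linarith
  have hσ : 0 < σ := (abs_nonneg x).trans_lt hxσ
  have hxt : x ∈ Ioo (-σ) σ := abs_lt.mp hxσ
  refine hasDerivAt_tsum_of_isPreconnected (g := fun i y => a i * y ^ n i)
    (g' := fun i y => a i * n i * y ^ (n i - 1)) (summable_abs_mul_nat_mul_pow_pred ha hσ hσρ)
    isOpen_Ioo isPreconnected_Ioo (fun i y _ => ?_) (fun i y hy => ?_) hxt ?_ hxt
  · simpa [mul_assoc] using (hasDerivAt_pow (n i) y).const_mul (a i)
  · rw [Real.norm_eq_abs, abs_mul, abs_mul, abs_pow, Nat.abs_cast]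
    gcongr
    exact (abs_lt.mpr hy).le
  · refine Summable.of_norm_bounded ha fun i => ?_
    rw [Real.norm_eq_abs, abs_mul, abs_pow]
    gcongr

lemma isBigO_tsum_mul_pow (hρ : 0 < ρ) (ha : Summable fun i => |a i| * ρ ^ n i) {m : ℕ}
    (hm : ∀ i, n i < m → a i = 0) :
    (fun x => ∑' i, a i * x ^ n i) =O[𝓝 0] fun x => x ^ m := by
  refine .of_bound ((∑' i, |a i| * ρ ^ n i) / ρ ^ m) ?_
  filter_upwards [eventually_abs_sub_lt 0 hρ] with x hx
  rw [sub_zero] at hx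
  rw [mul_comm]
  -- `|x| ^ (m + k) ≤ |x| ^ m * ρ ^ k` for the indices of order `m + k ≥ m`
  refine tsum_of_norm_bounded ((ha.hasSum.div_const (ρ ^ m)).mul_left (‖x ^ m‖)) fun i => ?_
  by_cases hi : n i < m
  · simp [hm i hi]
  · obtain ⟨k, hk⟩ := Nat.exists_eq_add_of_le (not_lt.mp hi)
    rw [Real.norm_eq_abs, Real.norm_eq_abs, abs_mul, abs_pow, abs_pow, hk, pow_add, pow_add,
      mul_div_assoc, mul_div_cancel_left₀ _ (by positivity), mul_left_comm]
    gcongr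

lemma eq_zero_of_tsum_mul_pow_isBigO (hρ : 0 < ρ) (ha : Summable fun i => |a i| * ρ ^ n i)
    {m : ℕ} (i₀ : ι) (hi₀ : n i₀ < m) (hm : ∀ i ≠ i₀, n i < m → a i = 0)
    (hO : (fun x => ∑' i, a i * x ^ n i) =O[𝓝[>] 0] fun x => x ^ m) : a i₀ = 0 := by
  classical
  set a' : ι → ℝ := fun i => if i = i₀ then 0 else a i
  have ha' : Summable fun i => |a' i| * ρ ^ n i :=
    .of_nonneg_of_le (fun i => by positivity) (fun i => by
      simp only [a']; split_ifs <;> simp; positivity) ha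
  have hrest : (fun x => ∑' i, a' i * x ^ n i) =O[𝓝[>] 0] fun x => x ^ m :=
    (isBigO_tsum_mul_pow hρ ha' fun i hi => by
      simp only [a']; split_ifs with h
      exacts [rfl, hm i h hi]).mono nhdsWithin_le_nhds
  have hsplit : ∀ᶠ x in 𝓝 (0 : ℝ),
      ∑' i, a i * x ^ n i = a i₀ * x ^ n i₀ + ∑' i, a' i * x ^ n i := by
    filter_upwards [eventually_abs_sub_lt 0 hρ] with x hx
    rw [sub_zero] at hx
    have hsum : Summable fun i => a i * x ^ n i := .of_norm_bounded ha fun i => by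
      rw [Real.norm_eq_abs, abs_mul, abs_pow]
      gcongr
    rw [hsum.tsum_eq_add_tsum_ite i₀]
    congr 1
    refine tsum_congr fun i => ?_
    simp only [a']; split_ifs <;> simp
  refine eq_zero_of_mul_pow_isBigO hi₀ ((hO.sub hrest).congr' ?_ EventuallyEq.rfl)
  filter_upwards [nhdsWithin_le_nhds hsplit] with x hx
  rw [hx, add_sub_cancel_right]

end GeneralizedPowerSeries

lemma summable_abs_mul_pow_of_abs_le {c : ℕ → ℕ → ℝ} {ρ r : ℝ}
    (hS : Summable fun p : ℕ × ℕ => |c p.1 p.2| * ρ ^ p.1 * ρ ^ p.2) (hr : |r| ≤ ρ) :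
    Summable fun p : ℕ × ℕ => |c p.1 p.2 * r ^ p.1| * ρ ^ p.2 := by
  have hρ : 0 ≤ ρ := (abs_nonneg r).trans hr
  exact hS.of_nonneg_of_le (fun p => by positivity) fun p => by rw [abs_mul, abs_pow]; gcongr

lemma hasDerivAt_of_hasSum_mul_pow_mul_pow {Ψ : ℝ → ℝ → ℝ} {c : ℕ → ℕ → ℝ} {ε ρ : ℝ}
    (hsum : ∀ r R : ℝ, |r| < ε → |R| < ε →
      HasSum (fun p : ℕ × ℕ => c p.1 p.2 * r ^ p.1 * R ^ p.2) (Ψ r R))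
    (hρε : ρ < ε) (hS : Summable fun p : ℕ × ℕ => |c p.1 p.2| * ρ ^ p.1 * ρ ^ p.2)
    {r R : ℝ} (hr : |r| ≤ ρ) (hR : |R| < ρ) :
    HasDerivAt (fun R => Ψ r R) (∑' p : ℕ × ℕ, c p.1 p.2 * r ^ p.1 * p.2 * R ^ (p.2 - 1)) R := by
  refine (hasDerivAt_tsum_mul_pow (summable_abs_mul_pow_of_abs_le hS hr) hR
    ).congr_of_eventuallyEq ?_
  filter_upwards [eventually_abs_sub_lt R (sub_pos.mpr (hR.trans hρε))] with R' hR'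
  refine (hsum r R' (hr.trans_lt hρε) ?_).tsum_eq.symm
  linarith [abs_sub_abs_le_abs_sub R' R]

def derivOrderAlongCubic (p : ℕ × ℕ) : ℕ := p.1 + 3 * (p.2 - 1)

def derivCoeffAlongCubic (c : ℕ → ℕ → ℝ) (τ : ℝ) (p : ℕ × ℕ) : ℝ :=
  c p.1 p.2 * p.2 * τ ^ (p.2 - 1)

lemma deriv_eq_tsum_derivCoeffAlongCubic {Ψ : ℝ → ℝ → ℝ} {c : ℕ → ℕ → ℝ} {ε ρ : ℝ}
    (hsum : ∀ r R : ℝ, |r| < ε → |R| < ε →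
      HasSum (fun p : ℕ × ℕ => c p.1 p.2 * r ^ p.1 * R ^ p.2) (Ψ r R))
    (hρε : ρ < ε) (hS : Summable fun p : ℕ × ℕ => |c p.1 p.2| * ρ ^ p.1 * ρ ^ p.2)
    {r τ : ℝ} (hr : |r| ≤ ρ) (hR : |r ^ 3 * τ| < ρ) :
    deriv (fun R => Ψ r R) (r ^ 3 * τ) =
      ∑' p, derivCoeffAlongCubic c τ p * r ^ derivOrderAlongCubic p :=
  (hasDerivAt_of_hasSum_mul_pow_mul_pow hsum hρε hS hr hR).deriv.trans <| tsum_congr fun p => by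
    rw [derivCoeffAlongCubic, derivOrderAlongCubic, pow_add, pow_mul, mul_pow]
    ring

lemma summable_abs_derivCoeffAlongCubic {c : ℕ → ℕ → ℝ} {ρ ρ' τ : ℝ}
    (hS : Summable fun p : ℕ × ℕ => |c p.1 p.2| * ρ ^ p.1 * ρ ^ p.2) (hτ : 0 < τ)
    (hρ' : 0 < ρ') (hρ'ρ : ρ' ≤ ρ) (hcube : ρ' ^ 3 * τ < ρ) :
    Summable fun p => |derivCoeffAlongCubic c τ p| * ρ' ^ derivOrderAlongCubic p := by
  refine (summable_abs_mul_nat_mul_pow_pred (n := Prod.snd)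
    (summable_abs_mul_pow_of_abs_le hS ((abs_of_pos hρ').trans_le hρ'ρ)) (by positivity)
    hcube).congr fun p => ?_
  simp only [derivCoeffAlongCubic, derivOrderAlongCubic, abs_mul, abs_pow, Nat.abs_cast,
    abs_of_pos hτ, abs_of_pos hρ', pow_add, pow_mul, mul_pow]
  ring

lemma derivCoeffAlongCubic_eq_zero {c : ℕ → ℕ → ℝ}
    (hodd : ∀ i j : ℕ, Even (i + j) → c i j = 0) (hlow : ∀ i j : ℕ, i + j < 3 → c i j = 0)
    (h21 : c 2 1 = 0) (h12 : c 1 2 = 0) (τ : ℝ) {p : ℕ × ℕ} (hne : p ≠ (4, 1))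
    (hp : derivOrderAlongCubic p < 6) : derivCoeffAlongCubic c τ p = 0 := by
  obtain ⟨i, j⟩ := p
  rcases Nat.eq_zero_or_pos j with rfl | hj
  · simp [derivCoeffAlongCubic]
  suffices c i j = 0 by simp [derivCoeffAlongCubic, this]
  by_cases heven : Even (i + j)
  · exact hodd i j heven
  by_cases h3 : i + j < 3
  · exact hlow i j h3
  rw [Nat.not_even_iff_odd, Nat.odd_iff] at heven
  rw [derivOrderAlongCubic] at hp
  have : (i = 2 ∧ j = 1) ∨ (i = 1 ∧ j = 2) := by
    rw [Ne, Prod.mk.injEq] at hne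
    omega
  rcases this with ⟨rfl, rfl⟩ | ⟨rfl, rfl⟩
  exacts [h21, h12]

/-- Let `Ψ` be analytic near `(0,0)` with power-series coefficients
`c_{ij}` vanishing whenever `i+j` is even or `i+j < 3`, and with `c₂₁ = c₁₂ = 0`.
If for some `τ > 0` the function `r ↦ ∂_RΨ(r, r³τ)/r⁶` remains bounded as
`r → 0⁺`, then `c₄₁ = 0`. -/
theorem stmt12 (Ψ : ℝ → ℝ → ℝ) (c : ℕ → ℕ → ℝ)
    (hconv : ∃ ε > (0 : ℝ), ∀ r R : ℝ, |r| < ε → |R| < ε →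
      HasSum (fun ij : ℕ × ℕ => c ij.1 ij.2 * r ^ ij.1 * R ^ ij.2) (Ψ r R))
    (hodd : ∀ i j : ℕ, Even (i + j) → c i j = 0)
    (hlow : ∀ i j : ℕ, i + j < 3 → c i j = 0)
    (h21 : c 2 1 = 0) (h12 : c 1 2 = 0)
    (τ : ℝ) (hτ : 0 < τ)
    (hbdd : ∃ M : ℝ, ∀ᶠ r in nhdsWithin (0 : ℝ) (Ioi 0),
      |deriv (fun R => Ψ r R) (r ^ 3 * τ) / r ^ 6| ≤ M) :
    c 4 1 = 0 := by
  obtain ⟨ε, hε, hsum⟩ := hconv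
  obtain ⟨M, hM⟩ := hbdd
  have hρ : 0 < ε / 2 := half_pos hε
  have hS : Summable fun p : ℕ × ℕ => |c p.1 p.2| * (ε / 2) ^ p.1 * (ε / 2) ^ p.2 := by
    have hρε : |ε / 2| < ε := by rwa [abs_of_pos hρ, half_lt_self_iff]
    simpa [abs_mul, abs_of_pos hρ] using (hsum _ _ hρε hρε).summable.abs
  have hsmall : ∀ᶠ r in 𝓝 (0 : ℝ), |r| ≤ ε / 2 ∧ |r ^ 3 * τ| < ε / 2 :=
    ((continuous_abs.tendsto' 0 0 abs_zero).eventually (eventually_le_nhds hρ)).and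
      (((by fun_prop : Continuous fun r : ℝ => |r ^ 3 * τ|).tendsto' 0 0 (by simp)).eventually
        (eventually_lt_nhds hρ))
  have hO : (fun r => ∑' p, derivCoeffAlongCubic c τ p * r ^ derivOrderAlongCubic p)
      =O[𝓝[>] 0] fun r => r ^ 6 := by
    refine .of_bound M ?_
    filter_upwards [hM, hsmall.filter_mono nhdsWithin_le_nhds, self_mem_nhdsWithin]
      with r hMr hr hr0
    rw [← deriv_eq_tsum_derivCoeffAlongCubic hsum (half_lt_self hε) hS hr.1 hr.2,
      Real.norm_eq_abs, Real.norm_eq_abs]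
    rwa [abs_div, div_le_iff₀ (abs_pos.mpr (pow_ne_zero 6 (ne_of_gt hr0)))] at hMr
  obtain ⟨ρ', ⟨hρ'ρ, hcube⟩, hρ'⟩ :=
    ((hsmall.filter_mono nhdsWithin_le_nhds).and (self_mem_nhdsWithin (s := Ioi 0))).exists
  have hρ'0 : 0 < ρ' := hρ'
  rw [abs_of_pos hρ'0] at hρ'ρ
  rw [abs_of_pos (by positivity)] at hcube
  simpa [derivCoeffAlongCubic] using eq_zero_of_tsum_mul_pow_isBigO hρ'0
    (summable_abs_derivCoeffAlongCubic hS hτ hρ'0 hρ'ρ hcube) (4, 1) (by decide)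
    (fun p hne hp => derivCoeffAlongCubic_eq_zero hodd hlow h21 h12 τ hne hp) hO
end
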